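/- arXiv:1303.6235 — 4 statements merged into one kernel-verified Lean document; each statement's English description precedes it below -/
import Mathlib

section
/- Suppose X_n, X are Banach spaces with uniformly bounded operators P_n : X → X_n and J_n : X_n → X satisfying P_n J_n = I_n and J_n P_n f → f for all f ∈ X. Suppose A_n, A generate strongly continuous semigroups T_n, T with a uniform bound ‖T_n(t)‖ ≤ M e^{ωt}, and suppose Y ⊂ D(A) is a T-invariant Banach space with ‖T(t)‖_Y ≤ M e^{ωt} and P_n Y ⊂ D(A_n). If there exist C > 0 and p ∈ ℕ such that ‖A_n P_n f − P_n A f‖ ≤ C ‖f‖_Y / n^p for all f ∈ Y, then for each t > 0 there is C' > 0 with ‖T_n(t) P_n f − P_n T(t) f‖ ≤ C' ‖f‖_Y / n^p for all f ∈ Y, uniformly in t on compact intervals. -/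
/-!
Differentiate the interpolant `σ ↦ T' n (t - σ) (P n (T σ f))` on `[0, t]`: its derivative is
`T' n (t - σ)` applied to the consistency defect `P n (A g) - A' n (P n g)` at `g = T σ f ∈ Y`
(here `A` commutes with `T` on `Y`). Stability of `T' n` and of `T` on `Y` bound this derivative
by a multiple of `nY f / n ^ p`, uniformly for `σ ≤ t ≤ t₀`, and the mean value inequality
compares the endpoints `T' n t (P n f)` and `P n (T t f)`.
-/

open scoped Topology
open Filter Set

section StrongDerivative

variable {𝕜 E G : Type*} [NontriviallyNormedField 𝕜]
  [NormedAddCommGroup E] [NormedSpace 𝕜 E] [NormedAddCommGroup G] [NormedSpace 𝕜 G]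

theorem tendsto_clm_apply_of_eventually_opNorm_le {α : Type*} {l : Filter α}
    {F : α → E →L[𝕜] G} {v : α → E} {w : E} {y : G} {B : ℝ}
    (hB : ∀ᶠ a in l, ‖F a‖ ≤ B) (hFw : Tendsto (fun a => F a w) l (𝓝 y))
    (hv : Tendsto v l (𝓝 w)) :
    Tendsto (fun a => F a (v a)) l (𝓝 y) := by
  have hsmall : Tendsto (fun a => F a (v a - w)) l (𝓝 0) := by
    refine squeeze_zero_norm' ?_ (by simpa using (hv.sub_const w).norm.const_mul B)
    filter_upwards [hB] with a ha
    exact (F a).le_of_opNorm_le ha _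
  simpa [← map_add] using hsmall.add hFw

theorem HasDerivWithinAt.clm_apply_of_opNorm_le {F : 𝕜 → E →L[𝕜] G} {u : 𝕜 → E} {u' : E}
    {v : G} {s : Set 𝕜} {x : 𝕜} {B : ℝ} (hu : HasDerivWithinAt u u' s x)
    (hFu : HasDerivWithinAt (fun σ => F σ (u x)) v s x)
    (hFB : ∀ᶠ σ in 𝓝[s] x, ‖F σ‖ ≤ B) (hF : ContinuousWithinAt (fun σ => F σ u') s x) :
    HasDerivWithinAt (fun σ => F σ (u σ)) (F x u' + v) s x := by
  have hmoving : HasDerivWithinAt (fun σ => F σ (u σ - u x)) (F x u') s x := by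
    rw [hasDerivWithinAt_iff_tendsto_slope] at hu ⊢
    have hle : 𝓝[s \ {x}] x ≤ 𝓝[s] x := nhdsWithin_mono x sdiff_subset
    refine (tendsto_clm_apply_of_eventually_opNorm_le (hle hFB) (hF.tendsto.mono_left hle)
      hu).congr fun σ => ?_
    simp [slope]
  convert hmoving.add hFu using 1
  ext σ
  simp

end StrongDerivative

section Semigroup

variable {X Z : Type*} [NormedAddCommGroup X] [NormedSpace ℝ X]
  [NormedAddCommGroup Z] [NormedSpace ℝ Z]

theorem generator_apply_semigroup {T : ℝ → X →L[ℝ] X} {A : X → X} {DA : Set X}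
    (hT0 : T 0 = ContinuousLinearMap.id ℝ X)
    (hTsg : ∀ s t : ℝ, 0 ≤ s → 0 ≤ t → T (s + t) = (T s).comp (T t))
    (hgen : ∀ f ∈ DA, ∀ t : ℝ, 0 ≤ t → HasDerivAt (fun s => T s f) (T t (A f)) t)
    {f : X} (hf : f ∈ DA) {s : ℝ} (hs : 0 ≤ s) (hTf : T s f ∈ DA) :
    A (T s f) = T s (A f) := by
  have hleft : HasDerivWithinAt (fun τ => T τ (T s f)) (A (T s f)) (Ici 0) 0 := by
    simpa [hT0] using (hgen _ hTf 0 le_rfl).hasDerivWithinAt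
  have hright : HasDerivWithinAt (fun τ => T τ (T s f)) (T s (A f)) (Ici 0) 0 := by
    have hshift := HasDerivAt.comp_add_const 0 s (by simpa using hgen f hf s hs)
    refine hshift.hasDerivWithinAt.congr (fun τ hτ => ?_) (by simp [hT0])
    simp [hTsg τ s hτ hs]
  exact (uniqueDiffOn_Ici 0 0 self_mem_Ici).eq_deriv _ hleft hright

theorem norm_semigroup_apply_sub_le {S : ℝ → Z →L[ℝ] Z} {A' : Z → Z} {u u' : ℝ → Z}
    {t B D : ℝ} (ht : 0 ≤ t) (hS0 : S 0 = ContinuousLinearMap.id ℝ Z)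
    (hScont : ∀ z, ContinuousOn (fun τ => S τ z) (Ici 0))
    (hSB : ∀ τ ∈ Icc 0 t, ‖S τ‖ ≤ B)
    (hgen : ∀ s ∈ Icc 0 t, HasDerivAt (fun τ => S τ (u s)) (S (t - s) (A' (u s))) (t - s))
    (hu : ∀ s ∈ Icc 0 t, HasDerivWithinAt u (u' s) (Icc 0 t) s)
    (hD : ∀ s ∈ Icc 0 t, ‖u' s - A' (u s)‖ ≤ D) :
    ‖S t (u 0) - u t‖ ≤ B * D * t := by
  have hreflect : MapsTo (fun σ => t - σ) (Icc 0 t) (Icc 0 t) := fun σ ⟨h0, h1⟩ =>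
    ⟨by linarith, by linarith⟩
  have hderiv : ∀ s ∈ Icc 0 t, HasDerivWithinAt (fun σ => S (t - σ) (u σ))
      (S (t - s) (u' s - A' (u s))) (Icc 0 t) s := by
    intro s hs
    have hcont : ContinuousWithinAt (fun σ => S (t - σ) (u' s)) (Icc 0 t) s :=
      ((hScont (u' s)).comp (continuous_sub_left t).continuousOn
        (fun σ hσ => (hreflect hσ).1)) s hs
    have hbound : ∀ᶠ σ in 𝓝[Icc 0 t] s, ‖S (t - σ)‖ ≤ B :=
      eventually_nhdsWithin_of_forall fun σ hσ => hSB _ (hreflect hσ)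
    simpa [map_sub, sub_eq_add_neg] using (hu s hs).clm_apply_of_opNorm_le
      (HasDerivAt.comp_const_sub t s (hgen s hs)).hasDerivWithinAt hbound hcont
  have hnorm : ∀ s ∈ Icc 0 t, ‖S (t - s) (u' s - A' (u s))‖ ≤ B * D := fun s hs =>
    (S (t - s)).le_of_opNorm_le_of_le (hSB _ (hreflect hs)) (hD s hs)
  have hmvt := (convex_Icc 0 t).norm_image_sub_le_of_norm_hasDerivWithin_le hderiv hnorm
    (left_mem_Icc.mpr ht) (right_mem_Icc.mpr ht)
  simpa [hS0, norm_sub_rev, abs_of_nonneg ht] using hmvt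

end Semigroup

theorem mul_exp_mul_le_mul_exp_abs_mul {M ω τ t₀ : ℝ} (hM : 0 ≤ M) (hτ : τ ∈ Icc 0 t₀) :
    M * Real.exp (ω * τ) ≤ M * Real.exp (|ω| * t₀) := by
  gcongr M * Real.exp ?_
  calc ω * τ ≤ |ω| * τ := mul_le_mul_of_nonneg_right (le_abs_self ω) hτ.1
    _ ≤ |ω| * t₀ := mul_le_mul_of_nonneg_left hτ.2 (abs_nonneg ω)

theorem trotter_kato_quantitative_general
    {X : Type*} [NormedAddCommGroup X] [NormedSpace ℝ X]
    {Xn : ℕ → Type*} [∀ n, NormedAddCommGroup (Xn n)] [∀ n, NormedSpace ℝ (Xn n)]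
    (P : ∀ n, X →L[ℝ] Xn n)
    (T : ℝ → X →L[ℝ] X) (T' : ∀ n, ℝ → Xn n →L[ℝ] Xn n)
    (hT0 : T 0 = ContinuousLinearMap.id ℝ X)
    (hTsg : ∀ s t : ℝ, 0 ≤ s → 0 ≤ t → T (s + t) = (T s).comp (T t))
    (hT'0 : ∀ n, T' n 0 = ContinuousLinearMap.id ℝ (Xn n))
    (hT'cont : ∀ n, ∀ x : Xn n, ContinuousOn (fun t => T' n t x) (Set.Ici 0))
    (M ω : ℝ) (hM : 1 ≤ M)
    (hstab : ∀ n, ∀ t : ℝ, 0 ≤ t → ‖T' n t‖ ≤ M * Real.exp (ω * t))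
    (DA : Set X) (A : X → X) (DA' : ∀ n, Set (Xn n)) (A' : ∀ n, Xn n → Xn n)
    (hgen : ∀ f ∈ DA, ∀ t : ℝ, 0 ≤ t → HasDerivAt (fun s => T s f) (T t (A f)) t)
    (hgen' : ∀ n, ∀ x ∈ DA' n, ∀ t : ℝ, 0 ≤ t →
      HasDerivAt (fun s => T' n s x) (T' n t (A' n x)) t)
    (Y : Set X) (nY : X → ℝ) (hYnonneg : ∀ f ∈ Y, 0 ≤ nY f)
    (hYDA : Y ⊆ DA)
    (hYinv : ∀ t : ℝ, 0 ≤ t → ∀ f ∈ Y, T t f ∈ Y)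
    (hYstab : ∀ t : ℝ, 0 ≤ t → ∀ f ∈ Y, nY (T t f) ≤ M * Real.exp (ω * t) * nY f)
    (hPY : ∀ n, ∀ f ∈ Y, P n f ∈ DA' n)
    (C : ℝ) (hC : 0 < C) (p : ℕ)
    (hcons : ∀ n : ℕ, 1 ≤ n → ∀ f ∈ Y,
      ‖A' n (P n f) - P n (A f)‖ ≤ C * nY f / (n : ℝ) ^ p) :
    ∀ t₀ : ℝ, 0 < t₀ → ∃ C' : ℝ, 0 < C' ∧
      ∀ n : ℕ, 1 ≤ n → ∀ f ∈ Y, ∀ t ∈ Set.Icc (0 : ℝ) t₀,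
        ‖T' n t (P n f) - P n (T t f)‖ ≤ C' * nY f / (n : ℝ) ^ p := by
  intro t₀ ht₀
  set B := M * Real.exp (|ω| * t₀)
  have hMB : ∀ τ ∈ Icc 0 t₀, M * Real.exp (ω * τ) ≤ B :=
    fun τ hτ => mul_exp_mul_le_mul_exp_abs_mul (by linarith) hτ
  refine ⟨C * B * B * t₀, by positivity, fun n hn f hf t ht => ?_⟩
  have hsub : Icc 0 t ⊆ Icc 0 t₀ := Icc_subset_Icc_right ht.2
  have hnYf := hYnonneg f hf
  have hdefect : ∀ s ∈ Icc 0 t,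
      ‖P n (T s (A f)) - A' n (P n (T s f))‖ ≤ C * (B * nY f) / (n : ℝ) ^ p := by
    intro s hs
    have hTf := hYinv s hs.1 f hf
    rw [norm_sub_rev, ← generator_apply_semigroup hT0 hTsg hgen (hYDA hf) hs.1 (hYDA hTf)]
    refine (hcons n hn _ hTf).trans ?_
    gcongr
    exact (hYstab s hs.1 f hf).trans (by gcongr; exact hMB s (hsub hs))
  have hduhamel := norm_semigroup_apply_sub_le ht.1 (hT'0 n) (hT'cont n)
    (fun τ hτ => (hstab n τ hτ.1).trans (hMB τ (hsub hτ)))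
    (fun s hs => hgen' n _ (hPY n _ (hYinv s hs.1 f hf)) _ (by linarith [hs.2]))
    (fun s hs => ((P n).hasFDerivAt.comp_hasDerivAt s (hgen f (hYDA hf) s hs.1)).hasDerivWithinAt)
    hdefect
  rw [hT0] at hduhamel
  calc _ ≤ B * (C * (B * nY f) / (n : ℝ) ^ p) * t := hduhamel
    _ ≤ B * (C * (B * nY f) / (n : ℝ) ^ p) * t₀ := by gcongr; exact ht.2
    _ = _ := by ring

/-- Quantitative Trotter–Kato approximation theorem.  `X` and the `X n` are Banach spaces,
`P n : X → X n` and `J n : X n → X` are uniformly bounded with `P n ∘ J n = id` and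
`J n (P n f) → f`; `T` and `T' n` are strongly continuous semigroups with generators
`(A, DA)` and `(A' n, DA' n)` satisfying the stability bound `‖T' n t‖ ≤ M e^{ω t}`;
`Y ⊆ DA` is a `T`-invariant subspace with norm `nY` on which `T` satisfies the same
bound, `P n Y ⊆ DA' n`, and the consistency estimate
`‖A' n (P n f) - P n (A f)‖ ≤ C nY f / n^p` holds on `Y`.  Then for every compact time
interval `[0, t₀]` there is `C' > 0` with
`‖T' n t (P n f) - P n (T t f)‖ ≤ C' nY f / n^p` for all `f ∈ Y`, `t ∈ [0, t₀]`, `n ≥ 1`. -/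
theorem trotter_kato_quantitative
    {X : Type*} [NormedAddCommGroup X] [NormedSpace ℝ X] [CompleteSpace X]
    {Xn : ℕ → Type*} [∀ n, NormedAddCommGroup (Xn n)] [∀ n, NormedSpace ℝ (Xn n)]
    [∀ n, CompleteSpace (Xn n)]
    (P : ∀ n, X →L[ℝ] Xn n) (J : ∀ n, Xn n →L[ℝ] X) (K : ℝ)
    (hK : 0 < K) (hPK : ∀ n, ‖P n‖ ≤ K) (hJK : ∀ n, ‖J n‖ ≤ K)
    (hPJ : ∀ n (x : Xn n), P n (J n x) = x)
    (hJP : ∀ f : X, Filter.Tendsto (fun n => J n (P n f)) Filter.atTop (𝓝 f))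
    (T : ℝ → X →L[ℝ] X) (T' : ∀ n, ℝ → Xn n →L[ℝ] Xn n)
    (hT0 : T 0 = ContinuousLinearMap.id ℝ X)
    (hTsg : ∀ s t : ℝ, 0 ≤ s → 0 ≤ t → T (s + t) = (T s).comp (T t))
    (hTcont : ∀ f : X, ContinuousOn (fun t => T t f) (Set.Ici 0))
    (hT'0 : ∀ n, T' n 0 = ContinuousLinearMap.id ℝ (Xn n))
    (hT'sg : ∀ n, ∀ s t : ℝ, 0 ≤ s → 0 ≤ t → T' n (s + t) = (T' n s).comp (T' n t))
    (hT'cont : ∀ n, ∀ x : Xn n, ContinuousOn (fun t => T' n t x) (Set.Ici 0))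
    (M ω : ℝ) (hM : 1 ≤ M)
    (hstab : ∀ n, ∀ t : ℝ, 0 ≤ t → ‖T' n t‖ ≤ M * Real.exp (ω * t))
    (DA : Set X) (A : X → X) (DA' : ∀ n, Set (Xn n)) (A' : ∀ n, Xn n → Xn n)
    (hgen : ∀ f ∈ DA, ∀ t : ℝ, 0 ≤ t → HasDerivAt (fun s => T s f) (T t (A f)) t)
    (hgen' : ∀ n, ∀ x ∈ DA' n, ∀ t : ℝ, 0 ≤ t →
      HasDerivAt (fun s => T' n s x) (T' n t (A' n x)) t)
    (Y : Set X) (nY : X → ℝ) (hYnonneg : ∀ f ∈ Y, 0 ≤ nY f)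
    (hYDA : Y ⊆ DA)
    (hYinv : ∀ t : ℝ, 0 ≤ t → ∀ f ∈ Y, T t f ∈ Y)
    (hYstab : ∀ t : ℝ, 0 ≤ t → ∀ f ∈ Y, nY (T t f) ≤ M * Real.exp (ω * t) * nY f)
    (hPY : ∀ n, ∀ f ∈ Y, P n f ∈ DA' n)
    (C : ℝ) (hC : 0 < C) (p : ℕ)
    (hcons : ∀ n : ℕ, 1 ≤ n → ∀ f ∈ Y,
      ‖A' n (P n f) - P n (A f)‖ ≤ C * nY f / (n : ℝ) ^ p) :
    ∀ t₀ : ℝ, 0 < t₀ → ∃ C' : ℝ, 0 < C' ∧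
      ∀ n : ℕ, 1 ≤ n → ∀ f ∈ Y, ∀ t ∈ Set.Icc (0 : ℝ) t₀,
        ‖T' n t (P n f) - P n (T t f)‖ ≤ C' * nY f / (n : ℝ) ^ p :=
  trotter_kato_quantitative_general P T T' hT0 hTsg hT'0 hT'cont M ω hM hstab DA A DA' A' hgen hgen'
    Y nY hYnonneg hYDA hYinv hYstab hPY C hC p hcons
end

section
/- Under the assumptions of the quantitative Trotter–Kato theorem, suppose in addition A generates an analytic semigroup, and there exist ε ∈ (0,1) and Banach spaces Y ↪ D(A) ↪ Z ↪ X such that T(s)Z ⊂ Y for all s > 0 with ‖T(s)‖_{L(Z,Y)} ≤ M/s^{1−ε}, and ‖(P_n A − A_n P_n) g‖ ≤ C‖g‖_Y/n^p for g ∈ Y. Then ‖T_n(t) P_n f − P_n T(t) f‖ ≤ C' ‖f‖_Z / n^p for all f ∈ Z and n ∈ ℕ, where C' depends only on t. -/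
/-!
Differentiate `φ s = T'ₙ (t - s) (Pₙ (T s f))` on `(0, t)`: its derivative is
`T'ₙ (t - s) ((Pₙ A - A'ₙ Pₙ) (T s f))`. Smoothing puts `T s f` in `Y` with
`nY (T s f) ≤ M s^(ε-1) nZ f`, so by consistency and stability the derivative is bounded by
`c s^(ε-1) nZ f / n^p`. This singularity is integrable at `0`, which bounds
`φ t - φ 0 = Pₙ T(t) f - T'ₙ(t) Pₙ f` by `c t^ε / ε · nZ f / n^p`.
-/
open Set Filter Topology Asymptotics

theorem mul_exp_mul_le_mul_exp_abs_mul_s8 {M ω r t : ℝ} (hM : 0 ≤ M) (hr : 0 ≤ r) (hrt : r ≤ t) :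
    M * Real.exp (ω * r) ≤ M * Real.exp (|ω| * t) := by
  refine mul_le_mul_of_nonneg_left (Real.exp_le_exp.2 ?_) hM
  calc ω * r ≤ |ω| * r := mul_le_mul_of_nonneg_right (le_abs_self ω) hr
    _ ≤ |ω| * t := mul_le_mul_of_nonneg_left hrt (abs_nonneg ω)

section OperatorFamily

variable {E F : Type*} [NormedAddCommGroup E] [NormedSpace ℝ E]
  [NormedAddCommGroup F] [NormedSpace ℝ F]

theorem ContinuousWithinAt.clm_apply_of_norm_le {α : Type*} [TopologicalSpace α]
    {Φ : α → E →L[ℝ] F} {u : α → E} {s : Set α} {x : α} {L : ℝ}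
    (hF : ContinuousWithinAt (fun y => Φ y (u x)) s x) (hu : ContinuousWithinAt u s x)
    (hbdd : ∀ᶠ y in 𝓝[s] x, ‖Φ y‖ ≤ L) :
    ContinuousWithinAt (fun y => Φ y (u y)) s x := by
  have hdiff : Tendsto (fun y => Φ y (u y - u x)) (𝓝[s] x) (𝓝 0) := by
    have hmaj : Tendsto (fun y => L * ‖u y - u x‖) (𝓝[s] x) (𝓝 0) := by
      simpa using ((hu.sub (continuousWithinAt_const (b := u x))).norm.const_mul L).tendsto
    refine squeeze_zero_norm' ?_ hmaj
    filter_upwards [hbdd] with y hy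
    exact (Φ y).le_of_opNorm_le hy _
  simpa [ContinuousWithinAt] using hdiff.add hF

theorem HasDerivAt.clm_apply_of_norm_le {Φ : ℝ → E →L[ℝ] F} {u : ℝ → E} {u' : E} {w : F}
    {x L : ℝ} (hF : HasDerivAt (fun y => Φ y (u x)) w x) (hu : HasDerivAt u u' x)
    (hF' : ContinuousAt (fun y => Φ y u') x) (hbdd : ∀ᶠ y in 𝓝 x, ‖Φ y‖ ≤ L) :
    HasDerivAt (fun y => Φ y (u y)) (Φ x u' + w) x := by
  rw [hasDerivAt_iff_isLittleO] at hF hu ⊢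
  have hfirst : (fun y => Φ y (u y - u x - (y - x) • u')) =o[𝓝 x] fun y => y - x :=
    (IsBigO.of_bound L (hbdd.mono fun y hy => (Φ y).le_of_opNorm_le hy _)).trans_isLittleO hu
  have hsecond : (fun y => (y - x) • (Φ y u' - Φ x u')) =o[𝓝 x] fun y => y - x := by
    have h := (isBigO_refl (fun y => y - x) (𝓝 x)).smul_isLittleO
      ((isLittleO_one_iff ℝ).2 (tendsto_sub_nhds_zero_iff.2 hF'))
    simpa using h
  refine (hfirst.add (hsecond.add hF)).congr_left fun y => ?_
  simp only [map_sub, map_smul, smul_sub, smul_add]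
  abel

end OperatorFamily

section Semigroup

variable {E : Type*} [NormedAddCommGroup E] [NormedSpace ℝ E] {T : ℝ → E →L[ℝ] E}
  {D : Set E} {A : E → E}

theorem semigroup_apply_eq_apply_sub
    (hTsg : ∀ s t : ℝ, 0 ≤ s → 0 ≤ t → T (s + t) = (T s).comp (T t))
    {r s : ℝ} (hr : 0 ≤ r) (hrs : r ≤ s) (f : E) : T s f = T (s - r) (T r f) := by
  conv_lhs => rw [← sub_add_cancel s r, hTsg (s - r) r (sub_nonneg.2 hrs) hr]
  rfl

theorem hasDerivAt_semigroup_apply_sub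
    (hgen : ∀ f ∈ D, ∀ t : ℝ, 0 ≤ t → HasDerivAt (fun s => T s f) (T t (A f)) t)
    {g : E} (hg : g ∈ D) {a : ℝ} (ha : 0 ≤ a) (r : ℝ) :
    HasDerivAt (fun s => T (s - r) g) (T a (A g)) (a + r) := by
  simpa [Function.comp_def] using
    (hgen g hg a ha).scomp_of_eq (a + r) ((hasDerivAt_id _).sub_const r) (by simp)

/-- Both sides are the right derivative at `r` of `s ↦ T s g = T (s - r) (T r g)`. -/
theorem semigroup_apply_generator_comm (hT0 : T 0 = ContinuousLinearMap.id ℝ E)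
    (hTsg : ∀ s t : ℝ, 0 ≤ s → 0 ≤ t → T (s + t) = (T s).comp (T t))
    (hgen : ∀ f ∈ D, ∀ t : ℝ, 0 ≤ t → HasDerivAt (fun s => T s f) (T t (A f)) t)
    {g : E} (hg : g ∈ D) {r : ℝ} (hr : 0 ≤ r) (hTg : T r g ∈ D) :
    T r (A g) = A (T r g) := by
  have hshift : HasDerivWithinAt (fun s => T s g) (A (T r g)) (Ici r) r := by
    have h := (hasDerivAt_semigroup_apply_sub hgen hTg le_rfl r).hasDerivWithinAt (s := Ici r)
    rw [zero_add, hT0] at h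
    exact h.congr (fun s hs => semigroup_apply_eq_apply_sub hTsg hr hs g) (by simp [hT0])
  exact (uniqueDiffOn_Ici r r self_mem_Ici).eq_deriv _
    (hgen g hg r hr).hasDerivWithinAt hshift

theorem hasDerivAt_semigroup_orbit (hT0 : T 0 = ContinuousLinearMap.id ℝ E)
    (hTsg : ∀ s t : ℝ, 0 ≤ s → 0 ≤ t → T (s + t) = (T s).comp (T t))
    (hgen : ∀ f ∈ D, ∀ t : ℝ, 0 ≤ t → HasDerivAt (fun s => T s f) (T t (A f)) t)
    {f : E} (hf : ∀ s, 0 < s → T s f ∈ D) {s₀ : ℝ} (hs₀ : 0 < s₀) :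
    HasDerivAt (fun s => T s f) (A (T s₀ f)) s₀ := by
  have hh : 0 < s₀ / 2 := half_pos hs₀
  have hhalf : T s₀ f = T (s₀ / 2) (T (s₀ / 2) f) := by
    rw [semigroup_apply_eq_apply_sub hTsg hh.le (half_le_self hs₀.le), sub_half]
  have hderiv := hasDerivAt_semigroup_apply_sub hgen (hf _ hh) hh.le (s₀ / 2)
  rw [add_halves, semigroup_apply_generator_comm hT0 hTsg hgen (hf _ hh) hh.le
    (hhalf ▸ hf s₀ hs₀), ← hhalf] at hderiv
  refine hderiv.congr_of_eventuallyEq ?_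
  filter_upwards [Ioi_mem_nhds (half_lt_self hs₀)] with s hs
  exact semigroup_apply_eq_apply_sub hTsg hh.le hs.le f

end Semigroup

section Duhamel

variable {F : Type*} [NormedAddCommGroup F] [NormedSpace ℝ F] {S : ℝ → F →L[ℝ] F}
  {D : Set F} {B : F → F} {t L : ℝ}

theorem continuousOn_semigroup_sub_apply (hcont : ∀ x : F, ContinuousOn (fun r => S r x) (Ici 0))
    (hbdd : ∀ r ∈ Icc 0 t, ‖S r‖ ≤ L) {u : ℝ → F} (hu : ContinuousOn u (Icc 0 t)) :
    ContinuousOn (fun s => S (t - s) (u s)) (Icc 0 t) := by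
  have hmaps : MapsTo (fun s : ℝ => t - s) (Icc 0 t) (Icc 0 t) :=
    fun s hs => ⟨sub_nonneg.2 hs.2, sub_le_self t hs.1⟩
  intro s hs
  refine ContinuousWithinAt.clm_apply_of_norm_le (L := L) ?_ (hu s hs) ?_
  · exact ((hcont (u s)).comp (continuous_const.sub continuous_id).continuousOn
      fun r hr => (hmaps hr).1) s hs
  · filter_upwards [self_mem_nhdsWithin] with r hr using hbdd _ (hmaps hr)

theorem hasDerivAt_semigroup_sub_apply
    (hgen : ∀ x ∈ D, ∀ r : ℝ, 0 ≤ r → HasDerivAt (fun s => S s x) (S r (B x)) r)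
    (hcont : ∀ x : F, ContinuousOn (fun r => S r x) (Ici 0))
    (hbdd : ∀ r ∈ Icc 0 t, ‖S r‖ ≤ L) {u : ℝ → F} {u' : F} {s₀ : ℝ} (hs₀ : s₀ ∈ Ioo 0 t)
    (hu : HasDerivAt u u' s₀) (hus : u s₀ ∈ D) :
    HasDerivAt (fun s => S (t - s) (u s)) (S (t - s₀) (u' - B (u s₀))) s₀ := by
  have hts₀ : 0 < t - s₀ := sub_pos.2 hs₀.2
  have hS : HasDerivAt (fun s => S (t - s) (u s₀)) (-S (t - s₀) (B (u s₀))) s₀ := by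
    simpa [Function.comp_def] using
      (hgen _ hus _ hts₀.le).scomp_of_eq s₀ ((hasDerivAt_id s₀).const_sub t) rfl
  have hS' : ContinuousAt (fun s => S (t - s) u') s₀ :=
    ((hcont u').continuousAt (Ici_mem_nhds hts₀)).comp
      (continuous_const.sub continuous_id).continuousAt
  have hbdd' : ∀ᶠ s in 𝓝 s₀, ‖S (t - s)‖ ≤ L := by
    filter_upwards [Ioo_mem_nhds hs₀.1 hs₀.2] with s hs
    exact hbdd _ ⟨sub_nonneg.2 hs.2.le, sub_le_self t hs.1.le⟩
  simpa [map_sub, sub_eq_add_neg] using hS.clm_apply_of_norm_le hu hS' hbdd'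

end Duhamel

theorem norm_sub_le_of_norm_deriv_le_mul_rpow {G : Type*} [NormedAddCommGroup G]
    [NormedSpace ℝ G] {φ φ' : ℝ → G} {t c ε : ℝ} (ht : 0 < t) (hε : 0 < ε)
    (hcont : ContinuousOn φ (Icc 0 t)) (hderiv : ∀ s ∈ Ioo 0 t, HasDerivAt φ (φ' s) s)
    (hbound : ∀ s ∈ Ioo 0 t, ‖φ' s‖ ≤ c * s ^ (ε - 1)) :
    ‖φ t - φ 0‖ ≤ c * t ^ ε / ε := by
  have hnear : ∀ δ ∈ Ioo 0 t, ‖φ t - φ δ‖ ≤ c * (t ^ ε - δ ^ ε) / ε := by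
    intro δ hδ
    have hsub : Ico δ t ⊆ Ioo 0 t := fun s hs => ⟨hδ.1.trans_le hs.1, hs.2⟩
    refine image_norm_le_of_norm_deriv_right_le_deriv_boundary' (f := fun s => φ s - φ δ)
      (B := fun s => c * (s ^ ε - δ ^ ε) / ε) (B' := fun s => c * s ^ (ε - 1))
      ((hcont.mono (Icc_subset_Icc hδ.1.le le_rfl)).sub continuousOn_const)
      (fun s hs => ((hderiv s (hsub hs)).sub_const _).hasDerivWithinAt) (by simp) ?_ ?_
      (fun s hs => hbound s (hsub hs)) ⟨hδ.2.le, le_rfl⟩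
    · exact ((((continuousOn_id.rpow_const fun s hs => Or.inr hε.le).sub
        continuousOn_const).const_smul c).div_const ε)
    · intro s hs
      have hs₀ : s ≠ 0 := (hsub hs).1.ne'
      refine ((((Real.hasDerivAt_rpow_const (p := ε) (Or.inl hs₀)).sub_const (δ ^ ε)).const_mul
        c).div_const ε).hasDerivWithinAt.congr_deriv ?_
      field_simp
  have hφ : Tendsto (fun δ => ‖φ t - φ δ‖) (𝓝[>] 0) (𝓝 ‖φ t - φ 0‖) :=
    (tendsto_const_nhds.sub ((hcont 0 ⟨le_rfl, ht.le⟩).mono_of_mem_nhdsWithin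
      (Icc_mem_nhdsGT ht))).norm
  have hB : Tendsto (fun δ : ℝ => c * (t ^ ε - δ ^ ε) / ε) (𝓝[>] 0) (𝓝 (c * t ^ ε / ε)) := by
    have h := ((Real.continuousAt_rpow_const 0 ε (Or.inr hε.le)).tendsto.mono_left
      (nhdsWithin_le_nhds (s := Ioi 0))).const_sub (t ^ ε) |>.const_mul c |>.div_const ε
    simpa [Real.zero_rpow hε.ne'] using h
  exact le_of_tendsto_of_tendsto hφ hB
    (eventually_of_mem (Ioo_mem_nhdsGT ht) hnear)

theorem trotter_kato_analytic_improvement_general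
    {X : Type*} [NormedAddCommGroup X] [NormedSpace ℝ X]
    {Xn : ℕ → Type*} [∀ n, NormedAddCommGroup (Xn n)] [∀ n, NormedSpace ℝ (Xn n)]
    (P : ∀ n, X →L[ℝ] Xn n)
    (T : ℝ → X →L[ℝ] X) (T' : ∀ n, ℝ → Xn n →L[ℝ] Xn n)
    (hT0 : T 0 = ContinuousLinearMap.id ℝ X)
    (hTsg : ∀ s t : ℝ, 0 ≤ s → 0 ≤ t → T (s + t) = (T s).comp (T t))
    (hTcont : ∀ f : X, ContinuousOn (fun t => T t f) (Set.Ici 0))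
    (hT'0 : ∀ n, T' n 0 = ContinuousLinearMap.id ℝ (Xn n))
    (hT'cont : ∀ n, ∀ x : Xn n, ContinuousOn (fun t => T' n t x) (Set.Ici 0))
    (M ω : ℝ) (hM : 1 ≤ M)
    (hstab : ∀ n, ∀ t : ℝ, 0 ≤ t → ‖T' n t‖ ≤ M * Real.exp (ω * t))
    (DA : Set X) (A : X → X) (DA' : ∀ n, Set (Xn n)) (A' : ∀ n, Xn n → Xn n)
    (hgen : ∀ f ∈ DA, ∀ t : ℝ, 0 ≤ t → HasDerivAt (fun s => T s f) (T t (A f)) t)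
    (hgen' : ∀ n, ∀ x ∈ DA' n, ∀ t : ℝ, 0 ≤ t →
      HasDerivAt (fun s => T' n s x) (T' n t (A' n x)) t)
    (Y Z : Set X) (nY nZ : X → ℝ)
    (hYDA : Y ⊆ DA)
    (hPY : ∀ n, ∀ f ∈ Y, P n f ∈ DA' n)
    (ε : ℝ) (hε : ε ∈ Set.Ioo (0 : ℝ) 1)
    (hsmooth : ∀ s : ℝ, 0 < s → ∀ f ∈ Z,
      T s f ∈ Y ∧ nY (T s f) ≤ M / Real.rpow s (1 - ε) * nZ f)
    (C : ℝ) (hC : 0 < C) (p : ℕ)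
    (hcons : ∀ n : ℕ, 1 ≤ n → ∀ g ∈ Y,
      ‖A' n (P n g) - P n (A g)‖ ≤ C * nY g / (n : ℝ) ^ p) :
    ∀ t : ℝ, 0 < t → ∃ C' : ℝ, 0 < C' ∧
      ∀ n : ℕ, 1 ≤ n → ∀ f ∈ Z,
        ‖T' n t (P n f) - P n (T t f)‖ ≤ C' * nZ f / (n : ℝ) ^ p := by
  intro t ht
  have hM₀ : 0 < M := one_pos.trans_le hM
  set L := M * Real.exp (|ω| * t)
  have hT'bdd : ∀ n, ∀ r ∈ Icc 0 t, ‖T' n r‖ ≤ L := fun n r hr =>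
    (hstab n r hr.1).trans (mul_exp_mul_le_mul_exp_abs_mul_s8 hM₀.le hr.1 hr.2)
  refine ⟨L * C * M * t ^ ε / ε, by have := hε.1; positivity, fun n hn f hf => ?_⟩
  have hTf : ∀ s, 0 < s → T s f ∈ Y := fun s hs => (hsmooth s hs f hf).1
  have hduhamel := norm_sub_le_of_norm_deriv_le_mul_rpow
    (φ := fun s => T' n (t - s) (P n (T s f))) (c := L * C * M * nZ f / (n : ℝ) ^ p) ht hε.1
    (continuousOn_semigroup_sub_apply (hT'cont n) (hT'bdd n)
      ((P n).continuous.comp_continuousOn ((hTcont f).mono fun s hs => hs.1)))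
    (fun s hs => hasDerivAt_semigroup_sub_apply (hgen' n) (hT'cont n) (hT'bdd n) hs
      ((P n).hasFDerivAt.comp_hasDerivAt s
        (hasDerivAt_semigroup_orbit hT0 hTsg hgen (fun r hr => hYDA (hTf r hr)) hs.1))
      (hPY n _ (hTf s hs.1)))
    (fun s hs => ?_)
  · simp only [sub_self, sub_zero, hT0, hT'0, ContinuousLinearMap.id_apply] at hduhamel
    rw [norm_sub_rev]
    exact hduhamel.trans_eq (by ring)
  · have hYbound : nY (T s f) ≤ M * s ^ (ε - 1) * nZ f := by
      have h := (hsmooth s hs.1 f hf).2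
      rwa [Real.rpow_eq_pow, div_eq_mul_inv, ← Real.rpow_neg hs.1.le, neg_sub] at h
    calc ‖T' n (t - s) (P n (A (T s f)) - A' n (P n (T s f)))‖
        ≤ L * ‖A' n (P n (T s f)) - P n (A (T s f))‖ := by
          rw [norm_sub_rev]
          exact (T' n (t - s)).le_of_opNorm_le
            (hT'bdd n _ ⟨sub_nonneg.2 hs.2.le, sub_le_self t hs.1.le⟩) _
      _ ≤ L * (C * nY (T s f) / (n : ℝ) ^ p) := by gcongr; exact hcons n hn _ (hTf s hs.1)
      _ ≤ L * (C * (M * s ^ (ε - 1) * nZ f) / (n : ℝ) ^ p) := by gcongr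
      _ = L * C * M * nZ f / (n : ℝ) ^ p * s ^ (ε - 1) := by ring

/-- Improved Trotter–Kato error estimate using the smoothing effect of an analytic
semigroup: with intermediate spaces `Y ⊆ D(A) ⊆ Z ⊆ X`, the smoothing bound
`nY (T s f) ≤ M s^{ε-1} nZ f` for `s > 0`, and the consistency estimate
`‖(P_n A - A_n P_n) g‖ ≤ C nY g / n^p` on `Y`, one gets
`‖T_n(t) P_n f - P_n T(t) f‖ ≤ C' nZ f / n^p` for all `f ∈ Z`, with `C'` depending
only on `t`. -/
theorem trotter_kato_analytic_improvement
    {X : Type*} [NormedAddCommGroup X] [NormedSpace ℝ X] [CompleteSpace X]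
    {Xn : ℕ → Type*} [∀ n, NormedAddCommGroup (Xn n)] [∀ n, NormedSpace ℝ (Xn n)]
    [∀ n, CompleteSpace (Xn n)]
    (P : ∀ n, X →L[ℝ] Xn n) (J : ∀ n, Xn n →L[ℝ] X) (K : ℝ)
    (hK : 0 < K) (hPK : ∀ n, ‖P n‖ ≤ K) (hJK : ∀ n, ‖J n‖ ≤ K)
    (hPJ : ∀ n (x : Xn n), P n (J n x) = x)
    (hJP : ∀ f : X, Filter.Tendsto (fun n => J n (P n f)) Filter.atTop (𝓝 f))
    (T : ℝ → X →L[ℝ] X) (T' : ∀ n, ℝ → Xn n →L[ℝ] Xn n)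
    (hT0 : T 0 = ContinuousLinearMap.id ℝ X)
    (hTsg : ∀ s t : ℝ, 0 ≤ s → 0 ≤ t → T (s + t) = (T s).comp (T t))
    (hTcont : ∀ f : X, ContinuousOn (fun t => T t f) (Set.Ici 0))
    (hT'0 : ∀ n, T' n 0 = ContinuousLinearMap.id ℝ (Xn n))
    (hT'sg : ∀ n, ∀ s t : ℝ, 0 ≤ s → 0 ≤ t → T' n (s + t) = (T' n s).comp (T' n t))
    (hT'cont : ∀ n, ∀ x : Xn n, ContinuousOn (fun t => T' n t x) (Set.Ici 0))
    (M ω : ℝ) (hM : 1 ≤ M)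
    (hstab : ∀ n, ∀ t : ℝ, 0 ≤ t → ‖T' n t‖ ≤ M * Real.exp (ω * t))
    (DA : Set X) (A : X → X) (DA' : ∀ n, Set (Xn n)) (A' : ∀ n, Xn n → Xn n)
    (hgen : ∀ f ∈ DA, ∀ t : ℝ, 0 ≤ t → HasDerivAt (fun s => T s f) (T t (A f)) t)
    (hgen' : ∀ n, ∀ x ∈ DA' n, ∀ t : ℝ, 0 ≤ t →
      HasDerivAt (fun s => T' n s x) (T' n t (A' n x)) t)
    (Y Z : Set X) (nY nZ : X → ℝ)
    (hYnonneg : ∀ f ∈ Y, 0 ≤ nY f) (hZnonneg : ∀ f ∈ Z, 0 ≤ nZ f)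
    (hYDA : Y ⊆ DA) (hDAZ : DA ⊆ Z)
    (hYinv : ∀ t : ℝ, 0 ≤ t → ∀ f ∈ Y, T t f ∈ Y)
    (hYstab : ∀ t : ℝ, 0 ≤ t → ∀ f ∈ Y, nY (T t f) ≤ M * Real.exp (ω * t) * nY f)
    (hPY : ∀ n, ∀ f ∈ Y, P n f ∈ DA' n)
    (ε : ℝ) (hε : ε ∈ Set.Ioo (0 : ℝ) 1)
    (hsmooth : ∀ s : ℝ, 0 < s → ∀ f ∈ Z,
      T s f ∈ Y ∧ nY (T s f) ≤ M / Real.rpow s (1 - ε) * nZ f)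
    (C : ℝ) (hC : 0 < C) (p : ℕ)
    (hcons : ∀ n : ℕ, 1 ≤ n → ∀ g ∈ Y,
      ‖A' n (P n g) - P n (A g)‖ ≤ C * nY g / (n : ℝ) ^ p) :
    ∀ t : ℝ, 0 < t → ∃ C' : ℝ, 0 < C' ∧
      ∀ n : ℕ, 1 ≤ n → ∀ f ∈ Z,
        ‖T' n t (P n f) - P n (T t f)‖ ≤ C' * nZ f / (n : ℝ) ^ p :=
  trotter_kato_analytic_improvement_general P T T' hT0 hTsg hTcont hT'0 hT'cont M ω hM hstab DA A
    DA' A' hgen hgen' Y Z nY nZ hYDA hPY ε hε hsmooth C hC p hcons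
end

section
/- Let α > 0, h > 0, ω ≥ 0 and define w(z) = cos(ωz/h) − ω sin(ωz/h). Then w satisfies λ w = α h² w'' with λ = −αω², and the boundary condition λ w(0) = α h w'(0) holds automatically. Moreover, λ w(1) = −α h w'(1) holds if and only if tan(ω/h) = 2ω/(ω²−1) (when ω/h is not an odd multiple of π/2 and ω ≠ 1). -/
open Real

/-- The function `w(z) = cos(ωz/h) - ω sin(ωz/h)` satisfies `λ w = α h² w''` with
`λ = -αω²`; the left dynamic boundary condition `λ w(0) = αh w'(0)` holds automatically,
and the right one `λ w(1) = -αh w'(1)` holds iff `tan(ω/h) = 2ω/(ω² - 1)`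
(provided `ω/h` is not an odd multiple of `π/2` and `ω ≠ 1`). -/
theorem voter_eigenfunction_characterization
    (α h ω : ℝ) (hα : 0 < α) (hh : 0 < h) (hω : 0 ≤ ω) :
    let w : ℝ → ℝ := fun z => Real.cos (ω * z / h) - ω * Real.sin (ω * z / h)
    let lam : ℝ := -α * ω ^ 2
    (∀ z : ℝ, lam * w z = α * h ^ 2 * deriv (deriv w) z) ∧
      lam * w 0 = α * h * deriv w 0 ∧
      ((¬∃ k : ℤ, ω / h = (2 * (k : ℝ) + 1) * π / 2) → ω ≠ 1 →
        (lam * w 1 = -(α * h) * deriv w 1 ↔ Real.tan (ω / h) = 2 * ω / (ω ^ 2 - 1))) := by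
  intro w lam
  have hh' : h ≠ 0 := ne_of_gt hh
  have inner : ∀ z : ℝ, HasDerivAt (fun z : ℝ => ω * z / h) (ω / h) z := by
    intro z
    simpa [mul_comm] using (((hasDerivAt_id z).const_mul ω).div_const h)
  have hw : ∀ z : ℝ, HasDerivAt w
      (-(ω / h) * Real.sin (ω * z / h) - ω * ((ω / h) * Real.cos (ω * z / h))) z := by
    intro z
    have h1 := (inner z).cos
    have h2 := (inner z).sin
    have := h1.sub (h2.const_mul ω)
    convert this using 1
    · rfl
    · rfl
    · rfl
    · ring
  have hderiv : deriv w = fun z =>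
      -(ω / h) * Real.sin (ω * z / h) - ω * ((ω / h) * Real.cos (ω * z / h)) := by
    funext z; exact (hw z).deriv
  have hw2 : ∀ z : ℝ, HasDerivAt (deriv w)
      (-(ω / h) ^ 2 * Real.cos (ω * z / h) + ω * ((ω / h) ^ 2 * Real.sin (ω * z / h))) z := by
    intro z
    rw [hderiv]
    have h1 := (inner z).cos
    have h2 := (inner z).sin
    have := (h2.const_mul (-(ω / h))).sub ((h1.const_mul (ω / h)).const_mul ω)
    convert this using 1
    · rfl
    · rfl
    · rfl
    · ring
  refine ⟨?_, ?_, ?_⟩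
  · intro z
    rw [(hw2 z).deriv]
    show -α * ω ^ 2 * (Real.cos (ω * z / h) - ω * Real.sin (ω * z / h)) = _
    field_simp
    ring
  · rw [hderiv]
    show -α * ω ^ 2 * (Real.cos (ω * 0 / h) - ω * Real.sin (ω * 0 / h)) = _
    simp [hh']
    field_simp
  · intro hk hω1
    have hcos : Real.cos (ω / h) ≠ 0 := by
      rw [Real.cos_ne_zero_iff]
      intro k
      exact fun hc => hk ⟨k, hc⟩
    have hden : ω ^ 2 - 1 ≠ 0 := by
      intro hc
      have : ω = 1 := by nlinarith
      exact hω1 this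
    rw [hderiv]
    show -α * ω ^ 2 * (Real.cos (ω * 1 / h) - ω * Real.sin (ω * 1 / h)) =
      -(α * h) * (-(ω / h) * Real.sin (ω * 1 / h) - ω * ((ω / h) * Real.cos (ω * 1 / h))) ↔ _
    rw [Real.tan_eq_sin_div_cos, div_eq_div_iff hcos hden]
    have e1 : ω * 1 / h = ω / h := by ring
    rw [e1]
    have rhs_eq : -(α * h) * (-(ω / h) * Real.sin (ω / h) - ω * (ω / h * Real.cos (ω / h))) =
        α * ω * Real.sin (ω / h) + α * ω ^ 2 * Real.cos (ω / h) := by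
      field_simp
      ring
    rw [rhs_eq]
    constructor
    · intro hE
      rcases eq_or_lt_of_le hω with h0 | h0
      · simp [← h0]
      · have key : α * ω * (Real.sin (ω / h) * (ω ^ 2 - 1) - 2 * ω * Real.cos (ω / h)) = 0 := by
          linear_combination hE
        have hne : α * ω ≠ 0 := mul_ne_zero (ne_of_gt hα) (ne_of_gt h0)
        have := (mul_eq_zero.mp key).resolve_left hne
        linarith
    · intro hE
      linear_combination (α * ω) * hE
end

section
/- Let u(t,z) = e^{−αω²t}(cos(ωz/h) − ω sin(ωz/h)) where ω satisfies tan(ω/h) = 2ω/(ω²−1). Then u solves the PDE ∂_t u = αh² ∂_zz u on (0,1) together with the dynamic boundary conditions ∂_t u(t,0) = αh ∂_z u(t,0) and ∂_t u(t,1) = −αh ∂_z u(t,1). -/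
/-! `u` is the time mode `e^{-αω²t}` times `X(z) = cos(kz) - ω sin(kz)`, `k = ω/h`, and
`X'' = -k² X`, which gives the interior equation. The boundary condition at `0` is an identity
at `z = 0`; the one at `1` reduces, after cancelling `α e^{-αω²t}`, to
`ω (ω² - 1) sin k = 2 ω² cos k`, which is the dispersion relation `tan k = 2ω/(ω² - 1)`. -/

open Real

theorem deriv_exp_const_mul (c : ℝ) : deriv (fun s => exp (c * s)) = fun t => c * exp (c * t) :=
  funext fun t => by rw [(hasDerivAt_const_mul c).exp.deriv, mul_comm]

section CosSubMulSin

variable (a k : ℝ)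

theorem hasDerivAt_cos_sub_mul_sin (z : ℝ) :
    HasDerivAt (fun y => cos (k * y) - a * sin (k * y))
      (-k * (sin (k * z) + a * cos (k * z))) z := by
  have hk : HasDerivAt (fun y => k * y) k z := hasDerivAt_const_mul k
  exact (hk.cos.sub (hk.sin.const_mul a)).congr_deriv (by ring)

theorem hasDerivAt_sin_add_mul_cos (z : ℝ) :
    HasDerivAt (fun y => sin (k * y) + a * cos (k * y))
      (k * (cos (k * z) - a * sin (k * z))) z := by
  have hk : HasDerivAt (fun y => k * y) k z := hasDerivAt_const_mul k
  exact (hk.sin.add (hk.cos.const_mul a)).congr_deriv (by ring)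

theorem deriv_cos_sub_mul_sin :
    deriv (fun y => cos (k * y) - a * sin (k * y)) =
      fun z => -k * (sin (k * z) + a * cos (k * z)) :=
  funext fun z => (hasDerivAt_cos_sub_mul_sin a k z).deriv

theorem deriv_deriv_cos_sub_mul_sin :
    deriv (deriv fun y => cos (k * y) - a * sin (k * y)) =
      fun z => -k ^ 2 * (cos (k * z) - a * sin (k * z)) := by
  rw [deriv_cos_sub_mul_sin, deriv_const_mul_field']
  funext z
  rw [(hasDerivAt_sin_add_mul_cos a k z).deriv]
  ring

end CosSubMulSin

/-- Mathlib's `tan x` is `0` where `cos x = 0`, which forces `ω = 0` there;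
hence the factor `ω`. -/
theorem mul_sub_one_mul_sin_eq_of_tan_eq {x ω : ℝ} (hω : ω ^ 2 ≠ 1)
    (htan : tan x = 2 * ω / (ω ^ 2 - 1)) :
    ω * (ω ^ 2 - 1) * sin x = 2 * ω ^ 2 * cos x := by
  have hden : ω ^ 2 - 1 ≠ 0 := sub_ne_zero.mpr hω
  rw [tan_eq_sin_div_cos] at htan
  rcases eq_or_ne (cos x) 0 with hc | hc
  · rw [hc, div_zero, eq_comm, div_eq_zero_iff] at htan
    have hω0 : ω = 0 := by simpa [hden] using htan
    simp [hω0]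
  · rw [div_eq_div_iff hc hden] at htan
    linear_combination ω * htan

theorem voter_separated_solution_general
    (α h ω : ℝ) (hh : 0 < h) (hω2 : ω ^ 2 ≠ 1)
    (htan : Real.tan (ω / h) = 2 * ω / (ω ^ 2 - 1)) :
    let u : ℝ → ℝ → ℝ := fun t z =>
      Real.exp (-α * ω ^ 2 * t) * (Real.cos (ω * z / h) - ω * Real.sin (ω * z / h))
    (∀ t : ℝ, ∀ z ∈ Set.Ioo (0 : ℝ) 1,
        deriv (fun s => u s z) t = α * h ^ 2 * deriv (deriv fun y => u t y) z) ∧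
      (∀ t : ℝ, deriv (fun s => u s 0) t = α * h * deriv (fun y => u t y) 0) ∧
      (∀ t : ℝ, deriv (fun s => u s 1) t = -(α * h) * deriv (fun y => u t y) 1) := by
  intro u
  have hX (t : ℝ) : (fun y => u t y) =
      fun y => exp (-α * ω ^ 2 * t) * (cos (ω / h * y) - ω * sin (ω / h * y)) := by
    simp only [u, mul_div_right_comm]
  have hT (t z : ℝ) : deriv (fun s => u s z) t = -α * ω ^ 2 * u t z := by
    simp only [u, deriv_mul_const_field', deriv_exp_const_mul]
    ring
  have hZ (t : ℝ) : deriv (fun y => u t y) = fun z =>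
      exp (-α * ω ^ 2 * t) * (-(ω / h) * (sin (ω / h * z) + ω * cos (ω / h * z))) := by
    rw [hX, deriv_const_mul_field', deriv_cos_sub_mul_sin]
  have hZZ (t z : ℝ) : deriv (deriv fun y => u t y) z = -(ω / h) ^ 2 * u t z := by
    rw [hX, deriv_const_mul_field', deriv_const_mul_field', deriv_deriv_cos_sub_mul_sin]
    simp only [u, mul_div_right_comm]
    ring
  refine ⟨fun t z _ => ?_, fun t => ?_, fun t => ?_⟩
  · rw [hT, hZZ]
    field_simp
  · rw [hT, hZ]
    simp only [u, mul_zero, zero_div, cos_zero, sin_zero]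
    field_simp
    ring
  · rw [hT, hZ]
    simp only [u, mul_one]
    field_simp
    linear_combination α * mul_sub_one_mul_sin_eq_of_tan_eq hω2 htan

/-- The separated function `u(t,z) = e^{-αω²t}(cos(ωz/h) - ω sin(ωz/h))`, with `ω`
satisfying `tan(ω/h) = 2ω/(ω² - 1)`, solves `∂ₜ u = αh² ∂_zz u` on `(0,1)` together
with the dynamic boundary conditions `∂ₜ u(t,0) = αh ∂_z u(t,0)` and
`∂ₜ u(t,1) = -αh ∂_z u(t,1)`. -/
theorem voter_separated_solution
    (α h ω : ℝ) (hα : 0 < α) (hh : 0 < h) (hω2 : ω ^ 2 ≠ 1)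
    (htan : Real.tan (ω / h) = 2 * ω / (ω ^ 2 - 1)) :
    let u : ℝ → ℝ → ℝ := fun t z =>
      Real.exp (-α * ω ^ 2 * t) * (Real.cos (ω * z / h) - ω * Real.sin (ω * z / h))
    (∀ t : ℝ, ∀ z ∈ Set.Ioo (0 : ℝ) 1,
        deriv (fun s => u s z) t = α * h ^ 2 * deriv (deriv fun y => u t y) z) ∧
      (∀ t : ℝ, deriv (fun s => u s 0) t = α * h * deriv (fun y => u t y) 0) ∧
      (∀ t : ℝ, deriv (fun s => u s 1) t = -(α * h) * deriv (fun y => u t y) 1) :=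
  voter_separated_solution_general α h ω hh hω2 htan
end
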